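/- Let A ∈ ℝ^{m×n}, let Θ ∈ ℝ^{n×n} be diagonal with strictly positive diagonal entries, and let R_d ∈ ℝ^{m×m} be symmetric positive definite. Then the symmetric (n+m)×(n+m) matrix M = [[−Θ^{-1}, Aᵀ],[A, R_d]] is nonsingular and has exactly n strictly negative eigenvalues and exactly m strictly positive eigenvalues, counted with multiplicity. -/

import Mathlib

/-!
A subspace of dimension `k` on which the quadratic form of a real symmetric matrix is negative
(positive) definite forces at least `k` negative (positive) eigenvalues: otherwise some nonzero
vector of it has no component along the eigenvectors of that sign. The form of `M` is negative
definite on the first block, where it is `-Θ⁻¹`, and positive definite on the vectors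
`(Θ Aᵀ w, w)`, where it is the Schur complement form `w ↦ wᵀ (Rd + A Θ Aᵀ) w`. Hence there are at
least `n` negative and `m` positive eigenvalues; as there are `n + m` eigenvalues in all, the
bounds are equalities and `0` is not an eigenvalue.
-/

open Matrix Finset

section

variable {ι κ : Type*} [Fintype ι] [Fintype κ]

theorem card_le_card_filter_neg_of_sum_mul_sq_neg (Y : Matrix ι κ ℝ) (μ : ι → ℝ)
    (h : ∀ w ≠ 0, ∑ i, μ i * (Y *ᵥ w) i ^ 2 < 0) :
    Fintype.card κ ≤ #{i | μ i < 0} := by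
  let S : Finset ι := {i | μ i < 0}
  let c : (κ → ℝ) →ₗ[ℝ] (S → ℝ) := (Y.submatrix Subtype.val id).mulVecLin
  have hc : Function.Injective c := by
    rw [← LinearMap.ker_eq_bot, LinearMap.ker_eq_bot']
    intro w hw
    by_contra hne
    refine (h w hne).not_ge (sum_nonneg fun i _ => ?_)
    by_cases hi : μ i < 0
    · have hYw : (Y *ᵥ w) i = 0 := by
        simpa [c, mulVec, dotProduct] using congrFun hw ⟨i, by simpa [S] using hi⟩
      simp [hYw]
    · exact mul_nonneg (not_lt.1 hi) (sq_nonneg _)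
  simpa using LinearMap.finrank_le_finrank_of_injective hc

theorem dotProduct_transpose_mul_mul_mulVec {R : Type*} [CommSemiring R] (B : Matrix ι ι R)
    (X : Matrix ι κ R) (w : κ → R) :
    w ⬝ᵥ (Xᵀ * B * X) *ᵥ w = (X *ᵥ w) ⬝ᵥ B *ᵥ (X *ᵥ w) := by
  rw [← mulVec_mulVec, ← mulVec_mulVec, dotProduct_mulVec, vecMul_transpose]

variable [DecidableEq ι]

theorem card_filter_neg_add_card_filter_pos (f : ι → ℝ) :
    #{i | f i < 0} + #{i | 0 < f i} = #{i | f i ≠ 0} := by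
  rw [← card_union_of_disjoint (disjoint_filter.2 fun i _ h h' => h.not_gt h'), ← filter_or]
  simp_rw [ne_iff_lt_or_gt]

namespace Matrix.IsHermitian

theorem dotProduct_mulVec_eq_sum_eigenvalues {B : Matrix ι ι ℝ} (hB : B.IsHermitian) (x : ι → ℝ) :
    x ⬝ᵥ B *ᵥ x =
      ∑ i, hB.eigenvalues i * ((star (hB.eigenvectorUnitary : Matrix ι ι ℝ)) *ᵥ x) i ^ 2 := by
  conv_lhs => rw [hB.spectral_theorem, Unitary.conjStarAlgAut_apply]
  rw [← mulVec_mulVec, ← mulVec_mulVec, dotProduct_mulVec, ← mulVec_transpose,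
    ← conjTranspose_eq_transpose_of_trivial, ← star_eq_conjTranspose]
  simp [dotProduct, mulVec_diagonal, sq, mul_left_comm]

theorem card_le_card_filter_eigenvalues_neg {B : Matrix ι ι ℝ} (hB : B.IsHermitian)
    (X : Matrix ι κ ℝ) (hX : (-(Xᵀ * B * X)).PosDef) :
    Fintype.card κ ≤ #{i | hB.eigenvalues i < 0} := by
  refine card_le_card_filter_neg_of_sum_mul_sq_neg
    (star (hB.eigenvectorUnitary : Matrix ι ι ℝ) * X) _ fun w hw => ?_
  rw [← mulVec_mulVec, ← hB.dotProduct_mulVec_eq_sum_eigenvalues,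
    ← dotProduct_transpose_mul_mul_mulVec]
  simpa [neg_mulVec] using hX.dotProduct_mulVec_pos hw

theorem card_le_card_filter_eigenvalues_pos {B : Matrix ι ι ℝ} (hB : B.IsHermitian)
    (X : Matrix ι κ ℝ) (hX : (Xᵀ * B * X).PosDef) :
    Fintype.card κ ≤ #{i | 0 < hB.eigenvalues i} := by
  have hcard := card_le_card_filter_neg_of_sum_mul_sq_neg
    (star (hB.eigenvectorUnitary : Matrix ι ι ℝ) * X) (-hB.eigenvalues) fun w hw => ?_
  · simpa using hcard
  rw [← mulVec_mulVec]
  simp only [Pi.neg_apply, neg_mul, sum_neg_distrib, neg_lt_zero]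
  rw [← hB.dotProduct_mulVec_eq_sum_eigenvalues, ← dotProduct_transpose_mul_mul_mulVec]
  simpa using hX.dotProduct_mulVec_pos hw

theorem det_ne_zero_of_card_filter_neg_add_card_filter_pos {B : Matrix ι ι ℝ} (hB : B.IsHermitian)
    (h : #{i | hB.eigenvalues i < 0} + #{i | 0 < hB.eigenvalues i} = Fintype.card ι) :
    B.det ≠ 0 := by
  rw [card_filter_neg_add_card_filter_pos, ← card_univ, card_filter_eq_iff] at h
  rw [hB.det_eq_prod_eigenvalues, prod_ne_zero_iff]
  exact fun i hi => by simpa using h i hi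

end Matrix.IsHermitian

end

theorem transpose_fromRows_mul_fromBlocks_mul_fromRows {R : Type*} [CommSemiring R]
    {n m k : Type*} [Fintype n] [Fintype m]
    (P : Matrix n n R) (B : Matrix n m R) (C : Matrix m n R) (D : Matrix m m R)
    (Y : Matrix n k R) (Z : Matrix m k R) :
    (fromRows Y Z)ᵀ * fromBlocks P B C D * fromRows Y Z =
      Yᵀ * (P * Y + B * Z) + Zᵀ * (C * Y + D * Z) := by
  rw [Matrix.mul_assoc, fromBlocks_mul_fromRows, transpose_fromRows, fromCols_mul_fromRows]

theorem stmt_8 {m n : ℕ} (A : Matrix (Fin m) (Fin n) ℝ)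
    (d : Fin n → ℝ) (hd : ∀ j, 0 < d j)
    (Rd : Matrix (Fin m) (Fin m) ℝ) (hRd : Rd.PosDef)
    (M : Matrix (Fin n ⊕ Fin m) (Fin n ⊕ Fin m) ℝ)
    (hMdef : M = Matrix.fromBlocks (-(Matrix.diagonal d)⁻¹) Aᵀ A Rd)
    (hM : M.IsHermitian) :
    M.det ≠ 0 ∧
    (Finset.univ.filter fun i => hM.eigenvalues i < 0).card = n ∧
    (Finset.univ.filter fun i => 0 < hM.eigenvalues i).card = m := by
  have hΘ : (diagonal d).PosDef := .diagonal hd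
  have hneg : n ≤ #{i | hM.eigenvalues i < 0} := by
    simpa using hM.card_le_card_filter_eigenvalues_neg
      (fromRows (1 : Matrix (Fin n) (Fin n) ℝ) (0 : Matrix (Fin m) (Fin n) ℝ))
      (by simpa [hMdef, transpose_fromRows_mul_fromBlocks_mul_fromRows] using hΘ.inv)
  have hpos : m ≤ #{i | 0 < hM.eigenvalues i} := by
    have hcancel :
        -(diagonal d)⁻¹ * (diagonal d * Aᵀ) + Aᵀ * (1 : Matrix (Fin m) (Fin m) ℝ) = 0 := by
      rw [Matrix.neg_mul, ← Matrix.mul_assoc,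
        nonsing_inv_mul _ ((isUnit_iff_isUnit_det _).1 hΘ.isUnit)]
      simp
    simpa using hM.card_le_card_filter_eigenvalues_pos
      (fromRows (diagonal d * Aᵀ) (1 : Matrix (Fin m) (Fin m) ℝ)) (by
      rw [hMdef, transpose_fromRows_mul_fromBlocks_mul_fromRows, hcancel]
      simpa [Matrix.mul_assoc] using
        PosDef.posSemidef_add (hΘ.posSemidef.mul_mul_conjTranspose_same A) hRd)
  have htotal : #{i | hM.eigenvalues i < 0} + #{i | 0 < hM.eigenvalues i} ≤ n + m := by
    rw [card_filter_neg_add_card_filter_pos]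
    exact (card_le_univ _).trans_eq (by simp)
  refine ⟨hM.det_ne_zero_of_card_filter_neg_add_card_filter_pos ?_, by omega, by omega⟩
  simp only [Fintype.card_sum, Fintype.card_fin]
  omega
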